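/- arXiv:2510.02757 — 2 statements merged into one kernel-verified Lean document; each statement's English description precedes it below -/
import Mathlib

section
/- Let T > 0 and t ∈ [0,T). Let (F_s)_{s∈[0,T]} be a filtration on a probability space (Ω, 𝓕, P), let M : [0,T] → Ω → ℝ^d be an F-martingale with each M_s integrable, and let μ : [0,T] × Ω → ℝ^d be jointly measurable, uniformly bounded (|μ_s(ω)| ≤ C for all (s,ω)), and such that for P-a.e. ω the map s ↦ μ_s(ω) is continuous on [0,T]. Define X_s(ω) = x₀ + ∫₀^s μ_r(ω) dr + M_s(ω). Then for every sub-σ-algebra G ⊆ F_t, the drift estimator converges in L¹: E[ | (1/Δ) E[X_{t+Δ} − X_t | G] − E[μ_t | G] | ] → 0 as Δ → 0⁺ (Δ ranging over (0, T − t]). -/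
/-!
Along each path, `X_{t+Δ} - X_t = ∫_t^{t+Δ} μ_r dr + (M_{t+Δ} - M_t)`. Since `G ≤ F_t`, the tower
property kills the martingale increment, so the quantity in question is the `L¹` norm of
`E[Δ⁻¹ ∫_t^{t+Δ} μ_r dr - μ_t | G]`, which conditional expectation bounds by
`E|Δ⁻¹ ∫_t^{t+Δ} μ_r dr - μ_t|`. By the fundamental theorem of calculus the integrand tends to `0`
for a.e. `ω`, and it is bounded by `2C`, so dominated convergence finishes the proof.
-/

open MeasureTheory Filter Set Topology

section Averaging

variable {E : Type*} [NormedAddCommGroup E] [NormedSpace ℝ E]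

theorem tendsto_inv_smul_intervalIntegral_add_right [CompleteSpace E] {f : ℝ → E} {a : ℝ}
    (hmeas : StronglyMeasurableAtFilter f (𝓝[>] a)) (hf : ContinuousWithinAt f (Ioi a) a) :
    Tendsto (fun Δ : ℝ => Δ⁻¹ • ∫ r in a..a + Δ, f r) (𝓝[>] 0) (𝓝 (f a)) := by
  have hderiv : HasDerivWithinAt (fun u => ∫ r in a..u, f r) (f a) (Ioi a) a :=
    (intervalIntegral.integral_hasDerivWithinAt_right (s := Ici a) IntervalIntegrable.refl hmeas
      hf).mono Ioi_subset_Ici_self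
  rw [hasDerivWithinAt_iff_tendsto_slope' self_notMem_Ioi] at hderiv
  have hshift : Tendsto (fun Δ : ℝ => a + Δ) (𝓝[>] 0) (𝓝[>] a) := by
    have := (map_add_left_nhdsGT (c := a) (a := (0 : ℝ))).le
    rwa [add_zero] at this
  refine (hderiv.comp hshift).congr fun Δ => ?_
  simp [slope_def_module]

theorem norm_inv_smul_intervalIntegral_add_le {f : ℝ → E} {a Δ C : ℝ} (hΔ : 0 < Δ)
    (hbdd : ∀ r ∈ Ioc a (a + Δ), ‖f r‖ ≤ C) :
    ‖Δ⁻¹ • ∫ r in a..a + Δ, f r‖ ≤ C := by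
  have hle : ‖∫ r in a..a + Δ, f r‖ ≤ C * |a + Δ - a| :=
    intervalIntegral.norm_integral_le_of_norm_le_const fun r hr =>
      hbdd r (by rwa [uIoc_of_le (by linarith)] at hr)
  rw [add_sub_cancel_left, abs_of_pos hΔ] at hle
  rw [norm_smul, Real.norm_eq_abs, abs_of_pos (inv_pos.2 hΔ), inv_mul_le_iff₀ hΔ, mul_comm]
  exact hle

end Averaging

theorem intervalIntegrable_of_norm_le {E : Type*} [NormedAddCommGroup E] {f : ℝ → E}
    {a b C : ℝ} (hf : StronglyMeasurable f) (hbdd : ∀ r ∈ uIcc a b, ‖f r‖ ≤ C) :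
    IntervalIntegrable f volume a b :=
  (intervalIntegrable_const (c := C)).mono_fun' hf.aestronglyMeasurable <|
    (ae_restrict_mem measurableSet_uIoc).mono fun r hr => hbdd r (uIoc_subset_uIcc hr)

section ParametricIntegral

variable {Ω E : Type*} {mΩ : MeasurableSpace Ω} [NormedAddCommGroup E] [NormedSpace ℝ E]

theorem MeasureTheory.StronglyMeasurable.intervalIntegral_prod_left {f : ℝ → Ω → E}
    (hf : StronglyMeasurable (Function.uncurry f)) (a b : ℝ) :
    StronglyMeasurable fun ω => ∫ r in a..b, f r ω :=
  hf.integral_prod_left.sub hf.integral_prod_left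

theorem integrable_intervalIntegral_of_norm_le {P : Measure Ω} [IsFiniteMeasure P]
    {f : ℝ → Ω → E} {a b C : ℝ} (hf : StronglyMeasurable (Function.uncurry f))
    (hbdd : ∀ r ∈ uIcc a b, ∀ ω, ‖f r ω‖ ≤ C) :
    Integrable (fun ω => ∫ r in a..b, f r ω) P :=
  .of_bound (hf.intervalIntegral_prod_left a b).aestronglyMeasurable (C * |b - a|) <|
    ae_of_all _ fun ω => intervalIntegral.norm_integral_le_of_norm_le_const fun r hr =>
      hbdd r (uIoc_subset_uIcc hr) ω

end ParametricIntegral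

section ConditionalExpectation

variable {Ω E : Type*} {m m0 : MeasurableSpace Ω} {P : Measure Ω}
  [NormedAddCommGroup E] [NormedSpace ℝ E] [CompleteSpace E] {f g h : Ω → E}

theorem condExp_sub_ae_eq_zero_of_le {m' : MeasurableSpace Ω} (hm : m ≤ m') (hm' : m' ≤ m0)
    [SigmaFinite (P.trim hm')] (hf : Integrable f P) (hg : Integrable g P)
    (hfg : P[f|m'] =ᵐ[P] g) : P[f - g|m] =ᵐ[P] 0 := by
  have htower : P[f|m] =ᵐ[P] P[g|m] :=
    (condExp_condExp_of_le hm hm').symm.trans (condExp_congr_ae hfg)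
  filter_upwards [condExp_sub hf hg m, htower] with ω hsub htower
  simp [hsub, htower]

theorem integral_norm_smul_condExp_add_sub_condExp_le (c : ℝ) (hf : Integrable f P)
    (hg : Integrable g P) (hh : Integrable h P) (hg0 : P[g|m] =ᵐ[P] 0) :
    ∫ ω, ‖c • P[f + g|m] ω - P[h|m] ω‖ ∂P ≤ ∫ ω, ‖c • f ω - h ω‖ ∂P := by
  have hcondExp : (fun ω => c • P[f + g|m] ω - P[h|m] ω) =ᵐ[P] P[c • f - h|m] := by
    filter_upwards [condExp_add hf hg m, hg0, condExp_sub (hf.smul c) hh m,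
      condExp_smul c f m] with ω hadd hg0 hsub hsmul
    simp [hadd, hg0, hsub, hsmul]
  exact (integral_congr_ae (hcondExp.fun_comp norm)).trans_le (integral_norm_condExp_le _)

end ConditionalExpectation

section Drift

variable {Ω E : Type*} {mΩ : MeasurableSpace Ω} [NormedAddCommGroup E] [NormedSpace ℝ E]
  [CompleteSpace E] {P : Measure Ω} [IsFiniteMeasure P]

theorem tendsto_integral_norm_inv_smul_intervalIntegral_sub {f : ℝ → Ω → E} {t T C : ℝ}
    (hf : StronglyMeasurable (Function.uncurry f)) (hbdd : ∀ s ∈ Icc t T, ∀ ω, ‖f s ω‖ ≤ C)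
    (hcont : ∀ᵐ ω ∂P, ContinuousWithinAt (f · ω) (Ioi t) t) :
    Tendsto (fun Δ => ∫ ω, ‖Δ⁻¹ • (∫ r in t..t + Δ, f r ω) - f t ω‖ ∂P)
      (𝓝[Ioc 0 (T - t)] 0) (𝓝 0) := by
  have hsection : ∀ ω, StronglyMeasurable (f · ω) := fun ω =>
    hf.comp_measurable measurable_prodMk_right
  have hbdd' : ∀ Δ ∈ Ioc 0 (T - t), ∀ ω, ‖Δ⁻¹ • (∫ r in t..t + Δ, f r ω) - f t ω‖ ≤ C + C :=
    fun Δ hΔ ω => (norm_sub_le _ _).trans <| add_le_add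
      (norm_inv_smul_intervalIntegral_add_le hΔ.1 fun r hr =>
        hbdd r ⟨hr.1.le, by linarith [hr.2, hΔ.2]⟩ ω)
      (hbdd t ⟨le_rfl, by linarith [hΔ.1, hΔ.2]⟩ ω)
  have hlim := tendsto_integral_filter_of_dominated_convergence (fun _ => C + C)
    (Eventually.of_forall fun Δ =>
      (((hf.intervalIntegral_prod_left t (t + Δ)).const_smul Δ⁻¹).sub
        (hf.comp_measurable measurable_prodMk_left)).norm.aestronglyMeasurable)
    (eventually_nhdsWithin_of_forall fun Δ hΔ => ae_of_all _ fun ω => by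
      simpa using hbdd' Δ hΔ ω)
    (integrable_const _)
    (hcont.mono fun ω hω => by
      simpa using ((tendsto_inv_smul_intervalIntegral_add_right
        (hsection ω).stronglyMeasurableAtFilter hω).mono_left
          (nhdsWithin_mono _ Ioc_subset_Ioi_self)).sub_const (f t ω) |>.norm)
  rwa [integral_zero] at hlim

end Drift

theorem statement1_general
    {Ω : Type*} {m0 : MeasurableSpace Ω} {P : Measure Ω} [IsProbabilityMeasure P]
    {d : ℕ} {T t : ℝ}
    (ht : t ∈ Ico (0 : ℝ) T)
    (F : Filtration ℝ m0)
    (M : ℝ → Ω → EuclideanSpace ℝ (Fin d))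
    (hM_int : ∀ s ∈ Icc (0 : ℝ) T, Integrable (M s) P)
    (hM_mart : ∀ s ∈ Icc (0 : ℝ) T, ∀ u ∈ Icc (0 : ℝ) T, s ≤ u →
      P[M u|F s] =ᵐ[P] M s)
    (μ : ℝ → Ω → EuclideanSpace ℝ (Fin d))
    (hμ_meas : Measurable (Function.uncurry μ))
    (C : ℝ) (hμ_bdd : ∀ s ∈ Icc (0 : ℝ) T, ∀ ω, ‖μ s ω‖ ≤ C)
    (hμ_cont : ∀ᵐ ω ∂P, ContinuousOn (fun s => μ s ω) (Icc (0 : ℝ) T))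
    (x₀ : EuclideanSpace ℝ (Fin d))
    (X : ℝ → Ω → EuclideanSpace ℝ (Fin d))
    (hX : ∀ s ∈ Icc (0 : ℝ) T, ∀ ω, X s ω = x₀ + (∫ r in (0 : ℝ)..s, μ r ω) + M s ω)
    (G : MeasurableSpace Ω) (hG : G ≤ F t) :
    Tendsto (fun Δ : ℝ =>
        ∫ ω, ‖Δ⁻¹ • (P[fun ω' => X (t + Δ) ω' - X t ω'|G]) ω - (P[μ t|G]) ω‖ ∂P)
      (𝓝[Ioc (0 : ℝ) (T - t)] 0) (𝓝 0) := by
  have htT : t ∈ Icc 0 T := Ico_subset_Icc_self ht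
  have hμ_sm := hμ_meas.stronglyMeasurable
  have hμ_bdd' : ∀ a ∈ Icc 0 T, ∀ b ∈ Icc 0 T, ∀ r ∈ uIcc a b, ∀ ω, ‖μ r ω‖ ≤ C :=
    fun a ha b hb r hr => hμ_bdd r (uIcc_subset_Icc ha hb hr)
  have hincrement : ∀ s ∈ Icc 0 T, (fun ω => X s ω - X t ω) =
      (fun ω => ∫ r in t..s, μ r ω) + (M s - M t) := fun s hs => funext fun ω => by
    have hint : ∀ b ∈ Icc 0 T, IntervalIntegrable (μ · ω) volume 0 b := fun b hb =>
      intervalIntegrable_of_norm_le (hμ_sm.comp_measurable measurable_prodMk_right)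
        fun r hr => hμ_bdd' 0 ⟨le_rfl, ht.1.trans htT.2⟩ b hb r hr ω
    simp only [Pi.add_apply, Pi.sub_apply]
    rw [hX s hs, hX t htT, ← intervalIntegral.integral_interval_sub_left (hint s hs) (hint t htT)]
    abel
  refine squeeze_zero' (Eventually.of_forall fun Δ => integral_nonneg fun ω => norm_nonneg _)
    (eventually_nhdsWithin_of_forall fun Δ hΔ => ?_)
    (tendsto_integral_norm_inv_smul_intervalIntegral_sub (P := P) hμ_sm
      (fun s hs => hμ_bdd s ⟨ht.1.trans hs.1, hs.2⟩) ?_)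
  · have hs : t + Δ ∈ Icc 0 T := ⟨by linarith [ht.1, hΔ.1], by linarith [hΔ.2]⟩
    rw [hincrement _ hs]
    exact integral_norm_smul_condExp_add_sub_condExp_le Δ⁻¹
      (integrable_intervalIntegral_of_norm_le hμ_sm (hμ_bdd' t htT _ hs))
      ((hM_int _ hs).sub (hM_int t htT))
      (.of_bound (hμ_sm.comp_measurable measurable_prodMk_left).aestronglyMeasurable C
        (ae_of_all _ (hμ_bdd t htT)))
      (condExp_sub_ae_eq_zero_of_le hG (F.le t) (hM_int _ hs) (hM_int t htT)
        (hM_mart t htT _ hs (by linarith [hΔ.1])))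
  · filter_upwards [hμ_cont] with ω hω
    exact ((hω t htT).mono_of_mem_nhdsWithin (Icc_mem_nhdsGE_of_mem ht)).mono Ioi_subset_Ici_self

/-- For an Itô-type process `X = x₀ + ∫ μ + M` with `M` an `F`-martingale and
`μ` jointly measurable, bounded, and a.s. time-continuous, for every sub-σ-algebra `G ⊆ F t`
the drift estimator converges in L¹:
`E[ | (1/Δ) E[X_{t+Δ} − X_t | G] − E[μ_t | G] | ] → 0` as `Δ → 0⁺`, `Δ ∈ (0, T − t]`. -/
theorem statement1
    {Ω : Type*} {m0 : MeasurableSpace Ω} {P : Measure Ω} [IsProbabilityMeasure P]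
    {d : ℕ} {T t : ℝ}
    (hT : 0 < T) (ht : t ∈ Ico (0 : ℝ) T)
    (F : Filtration ℝ m0)
    (M : ℝ → Ω → EuclideanSpace ℝ (Fin d))
    (hM_adapted : ∀ s ∈ Icc (0 : ℝ) T, StronglyMeasurable[F s] (M s))
    (hM_int : ∀ s ∈ Icc (0 : ℝ) T, Integrable (M s) P)
    (hM_mart : ∀ s ∈ Icc (0 : ℝ) T, ∀ u ∈ Icc (0 : ℝ) T, s ≤ u →
      P[M u|F s] =ᵐ[P] M s)
    (μ : ℝ → Ω → EuclideanSpace ℝ (Fin d))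
    (hμ_meas : Measurable (Function.uncurry μ))
    (C : ℝ) (hμ_bdd : ∀ s ∈ Icc (0 : ℝ) T, ∀ ω, ‖μ s ω‖ ≤ C)
    (hμ_cont : ∀ᵐ ω ∂P, ContinuousOn (fun s => μ s ω) (Icc (0 : ℝ) T))
    (x₀ : EuclideanSpace ℝ (Fin d))
    (X : ℝ → Ω → EuclideanSpace ℝ (Fin d))
    (hX : ∀ s ∈ Icc (0 : ℝ) T, ∀ ω, X s ω = x₀ + (∫ r in (0 : ℝ)..s, μ r ω) + M s ω)
    (G : MeasurableSpace Ω) (hG : G ≤ F t) :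
    Tendsto (fun Δ : ℝ =>
        ∫ ω, ‖Δ⁻¹ • (P[fun ω' => X (t + Δ) ω' - X t ω'|G]) ω - (P[μ t|G]) ω‖ ∂P)
      (𝓝[Ioc (0 : ℝ) (T - t)] 0) (𝓝 0) :=
  statement1_general ht F M hM_int hM_mart μ hμ_meas C hμ_bdd hμ_cont x₀ X hX G hG
end

section
/- Let T > 0 and t ∈ [0,T). Let (F_s)_{s∈[0,T]} be a filtration on a probability space (Ω, 𝓕, P), let M : [0,T] → Ω → ℝ be an F-martingale with each M_s square-integrable, and let Σ : [0,T] × Ω → ℝ be jointly measurable, uniformly bounded, with s ↦ Σ_s(ω) continuous on [0,T] for P-a.e. ω, and such that s ↦ M_s² − ∫₀^s Σ_r dr is also an F-martingale. Then for every sub-σ-algebra G ⊆ F_t, the quadratic increment estimator converges in L¹: E[ | (1/Δ) E[(M_{t+Δ} − M_t)² | G] − E[Σ_t | G] | ] → 0 as Δ → 0⁺ (Δ ranging over (0, T − t]). -/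
/-!
Write `A_s = ∫₀ˢ Σ_r dr`. Since `M` and `M² - A` are martingales, the cross term of
`(M_{t+Δ} - M_t)²` has vanishing conditional expectation given `F_t`, so
`E[(M_{t+Δ} - M_t)² | F_t] = E[A_{t+Δ} - A_t | F_t]`, and the tower property carries this down to
`G ⊆ F_t`. The estimator error is therefore `E[Δ⁻¹ (A_{t+Δ} - A_t) - Σ_t | G]`, whose `L¹` norm is
at most that of `Δ⁻¹ (A_{t+Δ} - A_t) - Σ_t`. This tends to `0` pathwise by the fundamental theorem
of calculus and is bounded by `2C`, so dominated convergence concludes.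
-/

open MeasureTheory Filter Set Topology

section ConditionalExpectation

variable {Ω : Type*} {m m0 : MeasurableSpace Ω} {μ : Measure Ω}

theorem condExp_sub_ae_eq_zero {f g : Ω → ℝ} (hf : Integrable f μ) (hg : Integrable g μ)
    (hfg : μ[f|m] =ᵐ[μ] g) (hg_m : μ[g|m] =ᵐ[μ] g) : μ[f - g|m] =ᵐ[μ] 0 := by
  filter_upwards [condExp_sub hf hg m, hfg, hg_m] with ω h h₁ h₂
  simp [h, h₁, h₂]

variable [IsFiniteMeasure μ]

theorem condExp_sq_sub_ae_eq {X Y : Ω → ℝ} (hX : MemLp X 2 μ) (hY : MemLp Y 2 μ)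
    (hYX : μ[Y|m] =ᵐ[μ] X) (hXX : μ[X|m] =ᵐ[μ] X) :
    μ[fun ω => (Y ω - X ω) ^ 2|m] =ᵐ[μ] μ[fun ω => Y ω ^ 2 - X ω ^ 2|m] := by
  have hX_m : AEStronglyMeasurable[m] X μ :=
    stronglyMeasurable_condExp.aestronglyMeasurable.congr hXX
  have hcross_int : Integrable (X * (Y - X)) μ := hX.integrable_mul (hY.sub hX)
  have hcross : μ[X * (Y - X)|m] =ᵐ[μ] 0 := by
    filter_upwards [condExp_mul_of_aestronglyMeasurable_left hX_m hcross_int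
        ((hY.sub hX).integrable one_le_two),
      condExp_sub_ae_eq_zero (hY.integrable one_le_two) (hX.integrable one_le_two) hYX hXX]
      with ω h₁ h₂
    simp [h₁, h₂]
  have hsplit : (fun ω => (Y ω - X ω) ^ 2)
      = (fun ω => Y ω ^ 2 - X ω ^ 2) - (2 : ℝ) • (X * (Y - X)) := by
    ext ω; simp only [Pi.sub_apply, Pi.smul_apply, Pi.mul_apply, smul_eq_mul]; ring
  have hsq_int : Integrable (fun ω => Y ω ^ 2 - X ω ^ 2) μ := hY.integrable_sq.sub hX.integrable_sq
  rw [hsplit]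
  filter_upwards [condExp_sub hsq_int (hcross_int.smul (2 : ℝ)) m,
    condExp_smul (m := m) (μ := μ) (2 : ℝ) (X * (Y - X)), hcross] with ω h₁ h₂ h₃
  simp [h₁, h₂, h₃]

theorem condExp_sq_sub_ae_eq_condExp_sub_compensator {X Y A B : Ω → ℝ}
    (hX : MemLp X 2 μ) (hY : MemLp Y 2 μ) (hA : Integrable A μ) (hB : Integrable B μ)
    (hYX : μ[Y|m] =ᵐ[μ] X) (hXX : μ[X|m] =ᵐ[μ] X)
    (hNY : μ[fun ω => Y ω ^ 2 - A ω|m] =ᵐ[μ] fun ω => X ω ^ 2 - B ω)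
    (hNX : μ[fun ω => X ω ^ 2 - B ω|m] =ᵐ[μ] fun ω => X ω ^ 2 - B ω) :
    μ[fun ω => (Y ω - X ω) ^ 2|m] =ᵐ[μ] μ[A - B|m] := by
  have hNY_int : Integrable (fun ω => Y ω ^ 2 - A ω) μ := hY.integrable_sq.sub hA
  have hNX_int : Integrable (fun ω => X ω ^ 2 - B ω) μ := hX.integrable_sq.sub hB
  have hsplit : (fun ω => Y ω ^ 2 - X ω ^ 2)
      = ((fun ω => Y ω ^ 2 - A ω) - fun ω => X ω ^ 2 - B ω) + (A - B) := by
    ext ω; simp only [Pi.add_apply, Pi.sub_apply]; ring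
  refine (condExp_sq_sub_ae_eq hX hY hYX hXX).trans ?_
  rw [hsplit]
  filter_upwards [condExp_add (hNY_int.sub hNX_int) (hA.sub hB) m,
    condExp_sub_ae_eq_zero hNY_int hNX_int hNY hNX] with ω h₁ h₂
  simp [h₁, h₂]

theorem integral_abs_mul_condExp_sub_condExp_le {G : MeasurableSpace Ω} (hGm : G ≤ m)
    (hm : m ≤ m0) {f g S : Ω → ℝ} (hfg : μ[f|m] =ᵐ[μ] μ[g|m]) (hg : Integrable g μ)
    (hS : Integrable S μ) (c : ℝ) :
    ∫ ω, |c * μ[f|G] ω - μ[S|G] ω| ∂μ ≤ ∫ ω, |c * g ω - S ω| ∂μ := by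
  have hfg_G : μ[f|G] =ᵐ[μ] μ[g|G] :=
    (condExp_condExp_of_le hGm hm).symm.trans
      ((condExp_congr_ae hfg).trans (condExp_condExp_of_le hGm hm))
  have hlin : (fun ω => c * μ[f|G] ω - μ[S|G] ω) =ᵐ[μ] μ[c • g - S|G] := by
    filter_upwards [hfg_G, condExp_sub (hg.smul c) hS G, condExp_smul (m := G) (μ := μ) c g]
      with ω h₁ h₂ h₃
    simp [h₁, h₂, h₃]
  refine (integral_congr_ae (hlin.mono fun ω hω => congrArg abs hω)).trans_le ?_
  exact (integral_abs_condExp_le _).trans_eq (by simp)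

end ConditionalExpectation

section PathwiseSlope

variable {f : ℝ → ℝ} {a b t : ℝ}

theorem tendsto_slope_intervalIntegral (hf : ContinuousOn f (Icc a b)) (ht : t ∈ Icc a b) :
    Tendsto (fun Δ => Δ⁻¹ * ((∫ x in a..t + Δ, f x) - ∫ x in a..t, f x))
      (𝓝[Ioc 0 (b - t)] 0) (𝓝 (f t)) := by
  have : Fact (t ∈ Icc a b) := ⟨ht⟩
  have hderiv : HasDerivWithinAt (fun u => ∫ x in a..u, f x) (f t) (Icc a b) t :=
    intervalIntegral.integral_hasDerivWithinAt_right
      (hf.mono (uIcc_subset_Icc ⟨le_rfl, ht.1.trans ht.2⟩ ht)).intervalIntegrable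
      (hf.stronglyMeasurableAtFilter_nhdsWithin measurableSet_Icc t) (hf t ht)
  have hshift : Tendsto (t + ·) (𝓝[Ioc 0 (b - t)] 0) (𝓝[Icc a b \ {t}] t) := by
    have hcont : Tendsto (t + ·) (𝓝 0) (𝓝 t) := by simpa using (continuous_const_add t).tendsto 0
    refine tendsto_nhdsWithin_of_tendsto_nhds_of_eventually_within _
      (hcont.mono_left nhdsWithin_le_nhds) (eventually_mem_nhdsWithin.mono fun Δ hΔ => ?_)
    exact ⟨⟨by linarith [ht.1, hΔ.1], by linarith [hΔ.2]⟩, by simpa using hΔ.1.ne'⟩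
  refine ((hasDerivWithinAt_iff_tendsto_slope.mp hderiv).comp hshift).congr fun Δ => ?_
  simp [slope_def_field, div_eq_inv_mul]

theorem abs_slope_intervalIntegral_sub_le {C Δ : ℝ} (hf : ContinuousOn f (Icc a b))
    (hC : ∀ x ∈ Icc a b, |f x| ≤ C) (ht : t ∈ Icc a b) (hΔ : Δ ∈ Ioc 0 (b - t)) :
    |Δ⁻¹ * ((∫ x in a..t + Δ, f x) - ∫ x in a..t, f x) - f t| ≤ 2 * C := by
  have htΔ : t + Δ ∈ Icc a b := ⟨by linarith [ht.1, hΔ.1], by linarith [hΔ.2]⟩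
  have hint : ∀ u ∈ Icc a b, IntervalIntegrable f volume a u := fun u hu =>
    (hf.mono (uIcc_subset_Icc ⟨le_rfl, ht.1.trans ht.2⟩ hu)).intervalIntegrable
  have hincr : |(∫ x in a..t + Δ, f x) - ∫ x in a..t, f x| ≤ C * Δ := by
    rw [intervalIntegral.integral_interval_sub_left (hint _ htΔ) (hint t ht)]
    have := intervalIntegral.norm_integral_le_of_norm_le_const (f := f) (a := t) (b := t + Δ)
      (C := C) fun x hx => by
        rw [uIoc_of_le (by linarith [hΔ.1])] at hx
        exact hC x ⟨by linarith [ht.1, hx.1], hx.2.trans htΔ.2⟩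
    simpa [abs_of_pos hΔ.1] using this
  calc |Δ⁻¹ * ((∫ x in a..t + Δ, f x) - ∫ x in a..t, f x) - f t|
      ≤ Δ⁻¹ * |(∫ x in a..t + Δ, f x) - ∫ x in a..t, f x| + |f t| :=
        (abs_sub _ _).trans_eq (by rw [abs_mul, abs_of_pos (inv_pos.mpr hΔ.1)])
    _ ≤ Δ⁻¹ * (C * Δ) + C :=
        add_le_add (mul_le_mul_of_nonneg_left hincr (inv_nonneg.mpr hΔ.1.le)) (hC t ht)
    _ = 2 * C := by rw [mul_comm C, ← mul_assoc, inv_mul_cancel₀ hΔ.1.ne', one_mul]; ring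

end PathwiseSlope

section ParametricIntervalIntegral

variable {Ω : Type*} {m0 : MeasurableSpace Ω} {μ : Measure Ω} {Sig : ℝ → Ω → ℝ}

theorem measurable_intervalIntegral_of_measurable_uncurry
    (hSig : Measurable (Function.uncurry Sig)) (a b : ℝ) :
    Measurable fun ω => ∫ r in a..b, Sig r ω := by
  have hset : ∀ s : Set ℝ, StronglyMeasurable fun ω => ∫ r in s, Sig r ω :=
    fun s => StronglyMeasurable.integral_prod_right (ν := volume.restrict s)
      (f := fun ω r => Sig r ω) (hSig.comp measurable_swap).stronglyMeasurable
  exact ((hset _).sub (hset _)).measurable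

theorem integrable_intervalIntegral_of_measurable_uncurry [IsFiniteMeasure μ]
    (hSig : Measurable (Function.uncurry Sig)) {a b C : ℝ}
    (hC : ∀ r ∈ uIoc a b, ∀ ω, |Sig r ω| ≤ C) :
    Integrable (fun ω => ∫ r in a..b, Sig r ω) μ :=
  .of_bound (measurable_intervalIntegral_of_measurable_uncurry hSig a b).aestronglyMeasurable
    (C * |b - a|) (ae_of_all _ fun ω =>
      intervalIntegral.norm_integral_le_of_norm_le_const fun r hr => hC r hr ω)

theorem tendsto_integral_abs_slope_intervalIntegral_sub [IsFiniteMeasure μ]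
    (hSig : Measurable (Function.uncurry Sig)) {a b t C : ℝ}
    (hC : ∀ r ∈ Icc a b, ∀ ω, |Sig r ω| ≤ C)
    (hcont : ∀ᵐ ω ∂μ, ContinuousOn (fun r => Sig r ω) (Icc a b)) (ht : t ∈ Icc a b) :
    Tendsto (fun Δ => ∫ ω,
        |1 / Δ * ((∫ r in a..t + Δ, Sig r ω) - ∫ r in a..t, Sig r ω) - Sig t ω| ∂μ)
      (𝓝[Ioc 0 (b - t)] 0) (𝓝 0) := by
  have hmeas : ∀ Δ, Measurable fun ω =>
      |1 / Δ * ((∫ r in a..t + Δ, Sig r ω) - ∫ r in a..t, Sig r ω) - Sig t ω| := fun Δ =>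
    ((((measurable_intervalIntegral_of_measurable_uncurry hSig a _).sub
      (measurable_intervalIntegral_of_measurable_uncurry hSig a t)).const_mul _).sub
      (hSig.comp measurable_prodMk_left)).abs
  simpa [one_div] using tendsto_integral_filter_of_dominated_convergence (f := fun _ => 0)
    (fun _ => 2 * C)
    (Eventually.of_forall fun Δ => (hmeas Δ).aestronglyMeasurable)
    (eventually_mem_nhdsWithin.mono fun Δ hΔ => hcont.mono fun ω hω => by
      simpa [one_div] using abs_slope_intervalIntegral_sub_le hω (hC · · ω) ht hΔ)
    (integrable_const _)
    (hcont.mono fun ω hω => by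
      simpa [one_div] using ((tendsto_slope_intervalIntegral hω ht).sub_const (Sig t ω)).abs)

end ParametricIntervalIntegral

theorem statement5_general
    {Ω : Type*} {m0 : MeasurableSpace Ω} {P : Measure Ω} [IsProbabilityMeasure P]
    {T t : ℝ}
    (ht : t ∈ Ico (0 : ℝ) T)
    (F : Filtration ℝ m0)
    (M : ℝ → Ω → ℝ)
    (hM_sq : ∀ s ∈ Icc (0 : ℝ) T, MemLp (M s) 2 P)
    (hM_mart : ∀ s ∈ Icc (0 : ℝ) T, ∀ u ∈ Icc (0 : ℝ) T, s ≤ u →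
      P[M u|F s] =ᵐ[P] M s)
    (Sig : ℝ → Ω → ℝ)
    (hSig_meas : Measurable (Function.uncurry Sig))
    (C : ℝ) (hSig_bdd : ∀ s ∈ Icc (0 : ℝ) T, ∀ ω, |Sig s ω| ≤ C)
    (hSig_cont : ∀ᵐ ω ∂P, ContinuousOn (fun s => Sig s ω) (Icc (0 : ℝ) T))
    (hN_mart : ∀ s ∈ Icc (0 : ℝ) T, ∀ u ∈ Icc (0 : ℝ) T, s ≤ u →
      P[fun ω => (M u ω) ^ 2 - ∫ r in (0 : ℝ)..u, Sig r ω|F s]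
        =ᵐ[P] fun ω => (M s ω) ^ 2 - ∫ r in (0 : ℝ)..s, Sig r ω)
    (G : MeasurableSpace Ω) (hG : G ≤ F t) :
    Tendsto (fun Δ : ℝ =>
        ∫ ω, |(1 / Δ) * (P[fun ω' => (M (t + Δ) ω' - M t ω') ^ 2|G]) ω
          - (P[Sig t|G]) ω| ∂P)
      (𝓝[Ioc (0 : ℝ) (T - t)] 0) (𝓝 0) := by
  have htI : t ∈ Icc (0 : ℝ) T := Ico_subset_Icc_self ht
  have hshift : ∀ Δ ∈ Ioc (0 : ℝ) (T - t), t + Δ ∈ Icc (0 : ℝ) T := fun Δ hΔ =>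
    ⟨by linarith [ht.1, hΔ.1], by linarith [hΔ.2]⟩
  have hA_int : ∀ s ∈ Icc (0 : ℝ) T, Integrable (fun ω => ∫ r in (0 : ℝ)..s, Sig r ω) P :=
    fun s hs => integrable_intervalIntegral_of_measurable_uncurry hSig_meas fun r hr =>
      hSig_bdd r (uIoc_subset_uIcc.trans (uIcc_subset_Icc ⟨le_rfl, hs.1.trans hs.2⟩ hs) hr)
  have hSigt_meas : Measurable[m0] (Sig t) := hSig_meas.comp measurable_prodMk_left
  have hSigt_int : Integrable (Sig t) P :=
    .of_bound hSigt_meas.aestronglyMeasurable C (ae_of_all _ (hSig_bdd t htI))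
  have hslope_L1 := tendsto_integral_abs_slope_intervalIntegral_sub (μ := P) hSig_meas hSig_bdd
    hSig_cont htI
  refine squeeze_zero' (Eventually.of_forall fun Δ => integral_nonneg fun ω => abs_nonneg _) ?_
    hslope_L1
  filter_upwards [self_mem_nhdsWithin] with Δ hΔ
  have hu := hshift Δ hΔ
  exact integral_abs_mul_condExp_sub_condExp_le hG (F.le t)
    (condExp_sq_sub_ae_eq_condExp_sub_compensator (hM_sq t htI) (hM_sq _ hu) (hA_int _ hu)
      (hA_int t htI) (hM_mart t htI _ hu (by linarith [hΔ.1])) (hM_mart t htI t htI le_rfl)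
      (hN_mart t htI _ hu (by linarith [hΔ.1])) (hN_mart t htI t htI le_rfl))
    ((hA_int _ hu).sub (hA_int t htI)) hSigt_int (1 / Δ)

/-- For a square-integrable real `F`-martingale `M` with compensator `∫ Σ`
(`Σ` jointly measurable, bounded, a.s. time-continuous), for every sub-σ-algebra `G ⊆ F t`
the quadratic increment estimator converges in L¹:
`E[ | (1/Δ) E[(M_{t+Δ} − M_t)² | G] − E[Σ_t | G] | ] → 0` as `Δ → 0⁺`, `Δ ∈ (0, T − t]`. -/
theorem statement5
    {Ω : Type*} {m0 : MeasurableSpace Ω} {P : Measure Ω} [IsProbabilityMeasure P]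
    {T t : ℝ}
    (hT : 0 < T) (ht : t ∈ Ico (0 : ℝ) T)
    (F : Filtration ℝ m0)
    (M : ℝ → Ω → ℝ)
    (hM_adapted : ∀ s ∈ Icc (0 : ℝ) T, StronglyMeasurable[F s] (M s))
    (hM_sq : ∀ s ∈ Icc (0 : ℝ) T, MemLp (M s) 2 P)
    (hM_mart : ∀ s ∈ Icc (0 : ℝ) T, ∀ u ∈ Icc (0 : ℝ) T, s ≤ u →
      P[M u|F s] =ᵐ[P] M s)
    (Sig : ℝ → Ω → ℝ)
    (hSig_meas : Measurable (Function.uncurry Sig))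
    (C : ℝ) (hSig_bdd : ∀ s ∈ Icc (0 : ℝ) T, ∀ ω, |Sig s ω| ≤ C)
    (hSig_cont : ∀ᵐ ω ∂P, ContinuousOn (fun s => Sig s ω) (Icc (0 : ℝ) T))
    (hN_adapted : ∀ s ∈ Icc (0 : ℝ) T,
      StronglyMeasurable[F s] (fun ω => (M s ω) ^ 2 - ∫ r in (0 : ℝ)..s, Sig r ω))
    (hN_int : ∀ s ∈ Icc (0 : ℝ) T,
      Integrable (fun ω => (M s ω) ^ 2 - ∫ r in (0 : ℝ)..s, Sig r ω) P)
    (hN_mart : ∀ s ∈ Icc (0 : ℝ) T, ∀ u ∈ Icc (0 : ℝ) T, s ≤ u →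
      P[fun ω => (M u ω) ^ 2 - ∫ r in (0 : ℝ)..u, Sig r ω|F s]
        =ᵐ[P] fun ω => (M s ω) ^ 2 - ∫ r in (0 : ℝ)..s, Sig r ω)
    (G : MeasurableSpace Ω) (hG : G ≤ F t) :
    Tendsto (fun Δ : ℝ =>
        ∫ ω, |(1 / Δ) * (P[fun ω' => (M (t + Δ) ω' - M t ω') ^ 2|G]) ω
          - (P[Sig t|G]) ω| ∂P)
      (𝓝[Ioc (0 : ℝ) (T - t)] 0) (𝓝 0) :=
  statement5_general ht F M hM_sq hM_mart Sig hSig_meas C hSig_bdd hSig_cont hN_mart G hG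
end
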